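/- Optimal active power injection: let K_P = diag(k_P) be diagonal positive definite and P* ∈ ℝⁿ, and set ū_P := −(1ᵀP* / (1ᵀ K_P⁻¹ 1))·1. Then: (i) every u ∈ ℝⁿ for which there exist θ ∈ ℝⁿ and V ∈ ℝⁿ_{>0} with 0 = −K_P(P(θ,V) − P*) + u satisfies the linear constraint 1ᵀ K_P⁻¹ u = −1ᵀ P*; (ii) ū_P satisfies this constraint and is the unique minimizer of the cost C(u) := (1/2) uᵀ K_P⁻¹ u over the set of all u ∈ ℝⁿ satisfying 1ᵀ K_P⁻¹ u = −1ᵀ P*. -/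

import Mathlib

/-! The network is lossless: the flows `B_ij V_i V_j sin(θ_i − θ_j)` are antisymmetric in
`(i, j)`, so the injections sum to zero and any steady state fixes the `K_P⁻¹`-weighted total
of `u`. The constant vector is then the `K_P⁻¹`-orthogonal projection of the origin onto that
affine hyperplane, hence its unique least-cost point. -/

open Real Finset Matrix

/-- Active power `P_i(θ,V) = ∑_{j ≠ i} B_ij V_i V_j sin(θ_i − θ_j)`. -/
noncomputable def activeP (n : ℕ) (B : Fin n → Fin n → ℝ) (θ V : Fin n → ℝ) (i : Fin n) : ℝ :=
  ∑ j ∈ Finset.univ.erase i, B i j * V i * V j * Real.sin (θ i - θ j)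

theorem sum_sum_erase_eq_zero_of_antisymm {ι M : Type*} [Fintype ι] [DecidableEq ι]
    [AddCommGroup M] [IsAddTorsionFree M] (f : ι → ι → M) (hf : ∀ i j, f j i = -f i j) :
    ∑ i, ∑ j ∈ univ.erase i, f i j = 0 := by
  rw [← self_eq_neg]
  calc ∑ i, ∑ j ∈ univ.erase i, f i j = ∑ j, ∑ i ∈ univ.erase j, f i j :=
        sum_comm' fun i j => by
          simp only [mem_univ, mem_erase, and_true, true_and]
          exact ne_comm
    _ = -∑ i, ∑ j ∈ univ.erase i, f i j := by
        rw [← sum_neg_distrib]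
        exact sum_congr rfl fun i _ => by
          rw [← sum_neg_distrib]
          exact sum_congr rfl fun j _ => hf i j

theorem sum_activeP_eq_zero {n : ℕ} {B : Fin n → Fin n → ℝ} (hB : ∀ i j, B i j = B j i)
    (θ V : Fin n → ℝ) : ∑ i, activeP n B θ V i = 0 :=
  sum_sum_erase_eq_zero_of_antisymm _ fun i j => by
    rw [hB j i, ← neg_sub (θ i), sin_neg]
    ring

theorem sum_inv_mul_eq_neg_sum_of_steady_state {n : ℕ} {B : Fin n → Fin n → ℝ}
    (hB : ∀ i j, B i j = B j i) {kP Pstar u θ V : Fin n → ℝ} (hkP : ∀ i, kP i ≠ 0)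
    (hsteady : ∀ i, 0 = -(kP i * (activeP n B θ V i - Pstar i)) + u i) :
    ∑ i, (kP i)⁻¹ * u i = -∑ i, Pstar i := by
  have hu : ∀ i, (kP i)⁻¹ * u i = activeP n B θ V i - Pstar i := fun i => by
    rw [inv_mul_eq_iff_eq_mul₀ (hkP i)]
    linarith [hsteady i]
  rw [sum_congr rfl fun i _ => hu i, sum_sub_distrib, sum_activeP_eq_zero hB, zero_sub]

section WeightedLeastSquares

variable {ι : Type*} [Fintype ι] {w : ι → ℝ}

theorem sum_mul_sum_div_sum (hw : ∀ i, 0 < w i) (x : ι → ℝ) :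
    ∑ i, w i * ((∑ j, x j) / ∑ j, w j) = ∑ j, x j := by
  rcases isEmpty_or_nonempty ι with hι | hι
  · simp
  · have hsum : 0 < ∑ j, w j := sum_pos (fun i _ => hw i) univ_nonempty
    rw [← sum_mul, mul_div_cancel₀ _ hsum.ne']

theorem sum_mul_sq_lt_of_sum_mul_eq (hw : ∀ i, 0 < w i) {u : ι → ℝ} {c : ℝ}
    (hu : ∑ i, w i * u i = ∑ i, w i * c) (hne : u ≠ fun _ => c) :
    ∑ i, w i * c ^ 2 < ∑ i, w i * u i ^ 2 := by
  obtain ⟨i₀, hi₀⟩ : ∃ i, u i ≠ c := by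
    contrapose! hne
    exact funext hne
  have hpos : 0 < ∑ i, w i * (u i - c) ^ 2 := by
    refine sum_pos' (fun i _ => mul_nonneg (hw i).le (sq_nonneg _)) ⟨i₀, mem_univ _, ?_⟩
    have := sub_ne_zero.mpr hi₀
    exact mul_pos (hw i₀) (by positivity)
  -- Pythagoras for the weights `w`: on the constraint set, `u - c` is `w`-orthogonal to `c`.
  have hpythagoras : ∑ i, w i * (u i - c) ^ 2 = ∑ i, w i * u i ^ 2 - ∑ i, w i * c ^ 2 := by
    calc ∑ i, w i * (u i - c) ^ 2
        = ∑ i, (w i * u i ^ 2 - 2 * c * (w i * u i) + 2 * c * (w i * c) - w i * c ^ 2) :=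
          sum_congr rfl fun i _ => by ring
      _ = ∑ i, w i * u i ^ 2 - ∑ i, w i * c ^ 2 := by
          rw [sum_sub_distrib, sum_add_distrib, sum_sub_distrib, ← mul_sum, ← mul_sum, hu]
          ring
  linarith

end WeightedLeastSquares

theorem optimal_active_power_injection_general
    (n : ℕ)
    (B : Fin n → Fin n → ℝ)
    (hBsymm : ∀ i j, B i j = B j i)
    (kP Pstar : Fin n → ℝ) (hkP : ∀ i, 0 < kP i)
    (uPbar : Fin n → ℝ)
    (huPbar : uPbar = fun _ => -((∑ i, Pstar i) / ∑ i, (kP i)⁻¹)) :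
    (∀ u : Fin n → ℝ,
      (∃ θ V : Fin n → ℝ, (∀ i, 0 < V i) ∧
        ∀ i, 0 = -(kP i * (activeP n B θ V i - Pstar i)) + u i) →
      ∑ i, (kP i)⁻¹ * u i = -∑ i, Pstar i) ∧
    (∑ i, (kP i)⁻¹ * uPbar i = -∑ i, Pstar i) ∧
    (∀ u : Fin n → ℝ, ∑ i, (kP i)⁻¹ * u i = -∑ i, Pstar i → u ≠ uPbar →
      (1 / 2) * ∑ i, (kP i)⁻¹ * uPbar i ^ 2 < (1 / 2) * ∑ i, (kP i)⁻¹ * u i ^ 2) := by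
  have hw : ∀ i, 0 < (kP i)⁻¹ := fun i => inv_pos.mpr (hkP i)
  subst huPbar
  beta_reduce
  have hconstraint :
      ∑ i, (kP i)⁻¹ * -((∑ i, Pstar i) / ∑ i, (kP i)⁻¹) = -∑ i, Pstar i := by
    simp only [mul_neg, sum_neg_distrib, sum_mul_sum_div_sum hw]
  refine ⟨fun u ⟨θ, V, _, hsteady⟩ =>
      sum_inv_mul_eq_neg_sum_of_steady_state hBsymm (fun i => (hkP i).ne') hsteady,
    hconstraint, fun u hu hne => ?_⟩
  have := sum_mul_sq_lt_of_sum_mul_eq hw (hu.trans hconstraint.symm) hne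
  linarith

/-- Optimal active power injection: with
`ū_P := −(1ᵀP*/(1ᵀK_P⁻¹1))·1`, (i) every `u` compatible with some steady state
satisfies `1ᵀK_P⁻¹u = −1ᵀP*`, and (ii) `ū_P` satisfies this constraint and is the
unique minimizer of `C(u) = (1/2)uᵀK_P⁻¹u` over it. -/
theorem optimal_active_power_injection
    (n : ℕ) (G : SimpleGraph (Fin n)) [DecidableRel G.Adj]
    (hconn : G.Connected)
    (B : Fin n → Fin n → ℝ)
    (hBsymm : ∀ i j, B i j = B j i)
    (hBpos : ∀ i j, G.Adj i j → 0 < B i j)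
    (hBzero : ∀ i j, ¬ G.Adj i j → B i j = 0)
    (kP Pstar : Fin n → ℝ) (hkP : ∀ i, 0 < kP i)
    (uPbar : Fin n → ℝ)
    (huPbar : uPbar = fun _ => -((∑ i, Pstar i) / ∑ i, (kP i)⁻¹)) :
    (∀ u : Fin n → ℝ,
      (∃ θ V : Fin n → ℝ, (∀ i, 0 < V i) ∧
        ∀ i, 0 = -(kP i * (activeP n B θ V i - Pstar i)) + u i) →
      ∑ i, (kP i)⁻¹ * u i = -∑ i, Pstar i) ∧
    (∑ i, (kP i)⁻¹ * uPbar i = -∑ i, Pstar i) ∧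
    (∀ u : Fin n → ℝ, ∑ i, (kP i)⁻¹ * u i = -∑ i, Pstar i → u ≠ uPbar →
      (1 / 2) * ∑ i, (kP i)⁻¹ * uPbar i ^ 2 < (1 / 2) * ∑ i, (kP i)⁻¹ * u i ^ 2) :=
  optimal_active_power_injection_general n B hBsymm kP Pstar hkP uPbar huPbar
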